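/- Let V be a nonsingular Hermitian (N+1)×(N+1) complex matrix, and let f, g be maps from ℂ^(n+1) to ℂ^(N+1) whose components are homogeneous polynomials of the same degree d. Suppose ⟨V f(z), f(z)⟩ = ⟨V g(z), g(z)⟩ for all z ∈ ℂ^(n+1), and suppose the components of f are linearly independent polynomials. Then there exists an invertible complex matrix C with C* V C = V such that g(z) = C f(z) for all z. -/

import Mathlib

/-!
Polarization: `(z, w) ↦ ⟨V f(z), f(w̄)⟩ - ⟨V g(z), g(w̄)⟩` is a polynomial in `(z, w)` vanishing
on the totally real subspace `w = z̄`, hence identically, so `⟨V f(z), f(w)⟩ = ⟨V g(z), g(w)⟩` for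
all `z, w`. Since the components of `f` are independent, there are points `p₀, …, p_N` at which the
vectors `f(p_k)` form an invertible matrix `P`; with `Q` the matrix of the `g(p_k)` this gives
`P* V P = Q* V Q`, and `C = Q P⁻¹` works.
-/

open MvPolynomial Matrix

namespace MvPolynomial

variable {σ ι : Type*}

theorem eq_zero_of_forall_eval_ofReal {Q : MvPolynomial σ ℂ}
    (h : ∀ x : σ → ℝ, eval (fun s => (x s : ℂ)) Q = 0) : Q = 0 := by
  refine funext_set (fun _ => Set.range ((↑) : ℝ → ℂ))
    (fun _ => Set.infinite_range_of_injective Complex.ofReal_injective) fun z hz => ?_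
  choose x hx using fun s => hz s (Set.mem_univ s)
  obtain rfl := _root_.funext hx
  rw [map_zero, h x]

/-- The substitution `z = x + i y`, `w = x - i y` turns `H` into a polynomial in `(x, y)` that
vanishes on real points. -/
theorem eq_zero_of_forall_eval_conj {H : MvPolynomial (σ ⊕ σ) ℂ}
    (h : ∀ z : σ → ℂ, eval (Sum.elim z (star z)) H = 0) : H = 0 := by
  set s : σ ⊕ σ → MvPolynomial (σ ⊕ σ) ℂ :=
    Sum.elim (fun j => X (.inl j) + C Complex.I * X (.inr j))
      (fun j => X (.inl j) - C Complex.I * X (.inr j))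
  have heval (y : σ ⊕ σ → ℂ) : eval y (bind₁ s H) = eval
      (Sum.elim (fun j => y (.inl j) + Complex.I * y (.inr j))
        (fun j => y (.inl j) - Complex.I * y (.inr j))) H := by
    show eval₂Hom _ y _ = _
    rw [eval₂Hom_bind₁]
    congr 1
    ext (j | j) <;> simp [s]
  have hreal : bind₁ s H = 0 := eq_zero_of_forall_eval_ofReal fun x => by
    rw [heval]
    convert h fun j => x (.inl j) + Complex.I * x (.inr j) using 3
    ext (j | j) <;> simp [sub_eq_add_neg]
  refine funext fun zw => ?_
  set y : σ ⊕ σ → ℂ := Sum.elim (fun j => (zw (.inl j) + zw (.inr j)) / 2)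
    (fun j => (zw (.inl j) - zw (.inr j)) / (2 * Complex.I))
  have hy : Sum.elim (fun j => y (.inl j) + Complex.I * y (.inr j))
      (fun j => y (.inl j) - Complex.I * y (.inr j)) = zw := by
    ext (j | j) <;> simp only [y, Sum.elim_inl, Sum.elim_inr] <;> field_simp <;> ring
  rw [map_zero, ← hy, ← heval, hreal, map_zero]

theorem eval_map_conj (z : σ → ℂ) (p : MvPolynomial σ ℂ) :
    eval (star z) (map (starRingEnd ℂ) p) = starRingEnd ℂ (eval z p) := by
  rw [eval_map, eval₂_comp]
  rfl

theorem linearIndependent_eval {R : Type*} [CommRing R] [IsDomain R] [Infinite R]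
    {f : ι → MvPolynomial σ R} (hf : LinearIndependent R f) :
    LinearIndependent R fun i (z : σ → R) => eval z (f i) := by
  let evals : MvPolynomial σ R →ₗ[R] (σ → R) → R := LinearMap.pi fun z => (aeval z).toLinearMap
  have hinj : LinearMap.ker evals = ⊥ :=
    LinearMap.ker_eq_bot.2 fun _ _ hpq => funext fun z => congrFun hpq z
  exact hf.map' evals hinj

variable [Fintype ι]

/-- The polynomial `(z, w) ↦ ⟨V f(z), f(w̄)⟩`. -/
noncomputable def hermitianPairing (V : Matrix ι ι ℂ) (f : ι → MvPolynomial σ ℂ) :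
    MvPolynomial (σ ⊕ σ) ℂ :=
  ∑ i, ∑ j, C (V i j) * rename Sum.inl (f j) * rename Sum.inr (map (starRingEnd ℂ) (f i))

theorem eval_hermitianPairing (V : Matrix ι ι ℂ) (f : ι → MvPolynomial σ ℂ) (z w : σ → ℂ) :
    eval (Sum.elim z (star w)) (hermitianPairing V f)
      = star (fun i => eval w (f i)) ⬝ᵥ (V *ᵥ fun j => eval z (f j)) := by
  simp only [hermitianPairing, map_sum, map_mul, eval_C, eval_rename, Sum.elim_comp_inl,
    Sum.elim_comp_inr, eval_map_conj]
  simp [dotProduct, mulVec, Finset.mul_sum, mul_comm, mul_left_comm]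

theorem star_dotProduct_mulVec_eval_eq_of_eq_on_diagonal (V : Matrix ι ι ℂ)
    {f g : ι → MvPolynomial σ ℂ}
    (h : ∀ z : σ → ℂ, star (fun i => eval z (f i)) ⬝ᵥ (V *ᵥ fun j => eval z (f j))
      = star (fun i => eval z (g i)) ⬝ᵥ (V *ᵥ fun j => eval z (g j)))
    (z w : σ → ℂ) :
    star (fun i => eval w (f i)) ⬝ᵥ (V *ᵥ fun j => eval z (f j))
      = star (fun i => eval w (g i)) ⬝ᵥ (V *ᵥ fun j => eval z (g j)) := by
  have hzero : hermitianPairing V f - hermitianPairing V g = 0 :=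
    eq_zero_of_forall_eval_conj fun z => by
      rw [map_sub, eval_hermitianPairing, eval_hermitianPairing, h, sub_self]
  have := congrArg (eval (Sum.elim z (star w))) hzero
  rwa [map_sub, map_zero, sub_eq_zero, eval_hermitianPairing, eval_hermitianPairing] at this

end MvPolynomial

theorem LinearIndependent.span_range_swap_eq_top {K X ι : Type*} [Field K] [Fintype ι]
    [DecidableEq ι]
    {v : ι → X → K} (hv : LinearIndependent K v) :
    Submodule.span K (Set.range fun x j => v j x) = ⊤ := by
  by_contra hne
  obtain ⟨φ, hφ, hφspan⟩ :=
    Submodule.exists_dual_map_eq_bot_of_lt_top (lt_top_iff_ne_top.2 hne) inferInstance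
  have hvanish (x : X) : φ (fun j => v j x) = 0 := by
    have := Submodule.mem_map_of_mem (f := φ)
      (Submodule.subset_span (Set.mem_range_self (f := fun x j => v j x) x))
    rwa [hφspan, Submodule.mem_bot] at this
  have hc (i : ι) : φ (fun j => if i = j then 1 else 0) = 0 := by
    refine Fintype.linearIndependent_iff.1 hv (fun i => φ fun j => if i = j then 1 else 0)
      (funext fun x => ?_) i
    have hx := hvanish x
    rw [LinearMap.pi_apply_eq_sum_univ φ] at hx
    simpa [mul_comm] using hx
  exact hφ (LinearMap.ext fun u => by rw [LinearMap.pi_apply_eq_sum_univ φ u]; simp [hc])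

theorem LinearIndependent.exists_isUnit_matrix_apply {K X ι : Type*} [Field K] [Fintype ι]
    [DecidableEq ι]
    {v : ι → X → K} (hv : LinearIndependent K v) :
    ∃ p : ι → X, IsUnit (Matrix.of fun k j => v j (p k)) := by
  let b := Module.Basis.ofSpan hv.span_range_swap_eq_top.ge
  let e := (Pi.basisFun K ι).indexEquiv b
  choose p hp using fun k => Module.Basis.ofSpan_subset hv.span_range_swap_eq_top.ge ⟨e k, rfl⟩
  refine ⟨p, linearIndependent_rows_iff_isUnit.1 ?_⟩
  have hrows : (Matrix.of fun k j => v j (p k)).row = b ∘ e := funext hp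
  rw [hrows]
  exact b.linearIndependent.comp e e.injective

namespace Matrix

theorem conjTranspose_transpose_mul_mulVec_apply {α ι : Type*} [NonUnitalSemiring α] [Star α]
    [Fintype ι] (R V : Matrix ι ι α) (u : ι → α) (k : ι) :
    ((Rᵀᴴ * V) *ᵥ u) k = star (R k) ⬝ᵥ (V *ᵥ u) := by
  rw [← mulVec_mulVec]
  rfl

theorem isUnit_of_conjTranspose_mul_mul_eq {K ι : Type*} [CommRing K] [StarRing K] [Fintype ι]
    [DecidableEq ι] {V P Q : Matrix ι ι K} (hV : IsUnit V) (hP : IsUnit P)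
    (h : Pᴴ * V * P = Qᴴ * V * Q) : IsUnit Q := by
  rw [isUnit_iff_isUnit_det] at *
  have hdet := congrArg det h
  simp only [det_mul, det_conjTranspose] at hdet
  have : IsUnit (star Q.det * V.det * Q.det) := hdet ▸ (hP.star.mul hV).mul hP
  exact isUnit_of_mul_isUnit_right this

theorem exists_isUnit_conjTranspose_mul_mul_eq {K ι X : Type*} [Field K] [StarRing K] [Fintype ι]
    [DecidableEq ι] {V : Matrix ι ι K} (hV : IsUnit V) {F G : X → ι → K}
    (h : ∀ x y, star (F y) ⬝ᵥ (V *ᵥ F x) = star (G y) ⬝ᵥ (V *ᵥ G x))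
    {p : ι → X} (hp : IsUnit (Matrix.of fun k => F (p k))) :
    ∃ C : Matrix ι ι K, IsUnit C ∧ Cᴴ * V * C = V ∧ ∀ x, G x = C *ᵥ F x := by
  set P := (Matrix.of fun k => F (p k))ᵀ
  set Q := (Matrix.of fun k => G (p k))ᵀ
  have hvec (x : X) : (Pᴴ * V) *ᵥ F x = (Qᴴ * V) *ᵥ G x := by
    ext k
    rw [conjTranspose_transpose_mul_mulVec_apply, conjTranspose_transpose_mul_mulVec_apply]
    exact h x (p k)
  have hgram : Pᴴ * V * P = Qᴴ * V * Q := by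
    ext k l
    exact congrFun (hvec (p l)) k
  have hPu : IsUnit P := (isUnit_transpose _).2 hp
  have hQu := isUnit_of_conjTranspose_mul_mul_eq hV hPu hgram
  have hPdet := (isUnit_iff_isUnit_det P).1 hPu
  set C := Q * P⁻¹
  have hQC : Qᴴ * V * C = Pᴴ * V := by
    rw [← mul_assoc, ← hgram, mul_assoc, mul_nonsing_inv _ hPdet, mul_one]
  refine ⟨C, hQu.mul (isUnit_nonsing_inv_iff.2 hPu), ?_, fun x => ?_⟩
  · rw [conjTranspose_mul, mul_assoc, mul_assoc, ← mul_assoc Qᴴ, hQC, ← mul_assoc,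
      ← conjTranspose_mul, mul_nonsing_inv _ hPdet, conjTranspose_one, one_mul]
  · refine mulVec_injective_iff_isUnit.2 (hQu.star.mul hV)
      (?_ : (Qᴴ * V) *ᵥ _ = (Qᴴ * V) *ᵥ _)
    rw [mulVec_mulVec, hQC, hvec]

end Matrix

theorem stmt_0 (n N : ℕ)
    (V : Matrix (Fin (N+1)) (Fin (N+1)) ℂ)
    (hVinv : IsUnit V)
    (f g : Fin (N+1) → MvPolynomial (Fin (n+1)) ℂ)
    (hind : LinearIndependent ℂ f)
    (heq : ∀ z : Fin (n+1) → ℂ,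
      ∑ i, ∑ j, V i j * eval z (f j) * starRingEnd ℂ (eval z (f i))
        = ∑ i, ∑ j, V i j * eval z (g j) * starRingEnd ℂ (eval z (g i))) :
    ∃ C : Matrix (Fin (N+1)) (Fin (N+1)) ℂ, IsUnit C ∧ Cᴴ * V * C = V ∧
      ∀ (z : Fin (n+1) → ℂ) (i : Fin (N+1)),
        eval z (g i) = ∑ j, C i j * eval z (f j) := by
  have hdiag (z : Fin (n+1) → ℂ) :
      star (fun i => eval z (f i)) ⬝ᵥ (V *ᵥ fun j => eval z (f j))
        = star (fun i => eval z (g i)) ⬝ᵥ (V *ᵥ fun j => eval z (g j)) := by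
    simpa [dotProduct, mulVec, Finset.mul_sum, mul_comm, mul_left_comm] using heq z
  obtain ⟨p, hp⟩ := (linearIndependent_eval hind).exists_isUnit_matrix_apply
  obtain ⟨C, hC, hCV, hgf⟩ := exists_isUnit_conjTranspose_mul_mul_eq hVinv
    (star_dotProduct_mulVec_eval_eq_of_eq_on_diagonal V hdiag) hp
  exact ⟨C, hC, hCV, fun z i => congrFun (hgf z) i⟩
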